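/- (Forget rule.) Let G be a finite simple graph, k ≥ 1, T ⊆ V(G), and v ∈ T. Let (H,ℓ) = C^c_k(G,T), and define ℓ'(x) to be the restriction of ℓ(x) to T∖{v}, for each node x of H. Let H' be the labeled graph obtained from H by iteratively contracting every edge between two nodes x and y with ℓ'(x) = ℓ'(y), assigning to each resulting node the common ℓ'-label of the contracted nodes (equivalently: H' is the quotient of H in which each connected component of the spanning subgraph of H consisting of the edges xy with ℓ'(x) = ℓ'(y) is contracted to a single node). Then (H',ℓ') = C^c_k(G, T∖{v}). Moreover, for every k-coloring γ of G, the γ-node of C^c_k(G, T∖{v}) is the node of H' that results from contracting the set of nodes of H that contains the γ-node of C^c_k(G,T). -/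

import Mathlib

open SimpleGraph

/-- A proper `k`-coloring of a graph. -/
def IsColoring {W : Type*} (G : SimpleGraph W) (k : ℕ) (α : W → Fin k) : Prop :=
  ∀ u v : W, G.Adj u v → α u ≠ α v

/-- The `k`-color graph `C_k(G)`: nodes are proper `k`-colorings of `G`,
two colorings being adjacent iff they differ on exactly one vertex. -/
def colorGraph {W : Type*} (G : SimpleGraph W) (k : ℕ) :
    SimpleGraph {α : W → Fin k // IsColoring G k α} where
  Adj α β := ∃! w, α.1 w ≠ β.1 w
  symm := by
    constructor
    rintro α β ⟨w, hw, hu⟩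
    exact ⟨w, hw.symm, fun u hu' => hu u hu'.symm⟩
  loopless := by
    constructor
    rintro α ⟨w, hw, -⟩
    exact hw rfl

/-- The subgraph of a labeled graph consisting of the edges between
equally labeled nodes. -/
def sameLabelSub {N L : Type*} (H : SimpleGraph N) (f : N → L) : SimpleGraph N where
  Adj x y := H.Adj x y ∧ f x = f y
  symm := ⟨fun _ _ h => ⟨h.1.symm, h.2.symm⟩⟩
  loopless := ⟨fun x h => H.ne_of_adj h.1 rfl⟩

/-- The quotient graph obtained from a labeled graph by contracting every
(maximal) connected set of equally labeled nodes (i.e. every label component)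
into a single node. -/
def quotGraph {N L : Type*} (H : SimpleGraph N) (f : N → L) :
    SimpleGraph (sameLabelSub H f).ConnectedComponent where
  Adj c d := c ≠ d ∧ ∃ a b, (sameLabelSub H f).connectedComponentMk a = c ∧
      (sameLabelSub H f).connectedComponentMk b = d ∧ H.Adj a b
  symm := by
    constructor
    rintro c d ⟨hne, a, b, ha, hb, hab⟩
    exact ⟨hne.symm, b, a, hb, ha, hab.symm⟩
  loopless := ⟨fun c h => h.1 rfl⟩

/-- The common label of a label component. -/
def quotLabel {N L : Type*} (H : SimpleGraph N) (f : N → L) :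
    (sameLabelSub H f).ConnectedComponent → L :=
  SimpleGraph.ConnectedComponent.lift f (by
    intro v w p hp
    clear hp
    induction p with
    | nil => rfl
    | cons h _ ih => exact (h : _ ∧ _).2.trans ih)

/-- The label of a coloring: its restriction to the terminal set `T`. -/
def csgLabelFun {W : Type*} (G : SimpleGraph W) (k : ℕ) (T : Set W) :
    {α : W → Fin k // IsColoring G k α} → (T → Fin k) :=
  fun α t => α.1 t.1

/-- The node set of the contracted solution graph: the label components. -/
abbrev CSGNode {W : Type*} (G : SimpleGraph W) (k : ℕ) (T : Set W) :=
  (sameLabelSub (colorGraph G k) (csgLabelFun G k T)).ConnectedComponent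

/-- The contracted solution graph `C^c_k(G,T)`. -/
def CSG {W : Type*} (G : SimpleGraph W) (k : ℕ) (T : Set W) : SimpleGraph (CSGNode G k T) :=
  quotGraph (colorGraph G k) (csgLabelFun G k T)

/-- The `γ`-node of the contracted solution graph: the label component containing `γ`. -/
def csgNode {W : Type*} (G : SimpleGraph W) (k : ℕ) (T : Set W)
    (γ : {α : W → Fin k // IsColoring G k α}) : CSGNode G k T :=
  (sameLabelSub (colorGraph G k) (csgLabelFun G k T)).connectedComponentMk γ

/-- The label of a node of the contracted solution graph: the common restriction
to `T` of its colorings. -/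
def csgLabel {W : Type*} (G : SimpleGraph W) (k : ℕ) (T : Set W) :
    CSGNode G k T → (T → Fin k) :=
  quotLabel (colorGraph G k) (csgLabelFun G k T)

/-- The restriction of a proper coloring to an induced subgraph. -/
def restrictColoring {W : Type*} (G : SimpleGraph W) (k : ℕ) (S : Set W)
    (γ : {α : W → Fin k // IsColoring G k α}) :
    {α : S → Fin k // IsColoring (G.induce S) k α} :=
  ⟨fun u => γ.1 u.1, fun u w h => γ.2 u.1 w.1 h⟩

/-- A graph is chordal if it contains no induced cycle of length greater than 3. -/
def Chordal {W : Type*} (G : SimpleGraph W) : Prop :=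
  ∀ n : ℕ, 4 ≤ n → IsEmpty (SimpleGraph.cycleGraph n ↪g G)

/-- `S` is a vertex cut: `G - S` is disconnected. -/
def IsVertexCut {W : Type*} (G : SimpleGraph W) (S : Set W) : Prop :=
  ¬ (G.induce Sᶜ).Preconnected

/-- `G` is `l`-connected. -/
def LConnected {W : Type*} (G : SimpleGraph W) (l : ℕ) : Prop :=
  G.Connected ∧ l + 1 ≤ Nat.card W ∧ ∀ S : Set W, IsVertexCut G S → l ≤ S.ncard

/-- A labeled graph `(H,ℓ)`, whose labels are `k`-colorings of the complete graph
on a vertex (type) `S`, is an `(|S|,k)`-color-complete graph. -/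
def IsColorComplete {N S : Type*} (k : ℕ) (H : SimpleGraph N) (ℓ : N → S → Fin k) : Prop :=
  (∀ x, Function.Injective (ℓ x)) ∧
  (∀ f : S → Fin k, Function.Injective f → ∃! x, ℓ x = f) ∧
  (∀ x y, H.Adj x y ↔ ∃! s, ℓ x s ≠ ℓ y s)

/-- The injective neighborhood property. -/
def INP {N L : Type*} (H : SimpleGraph N) (ℓ : N → L) : Prop :=
  ∀ u v w : N, H.Adj u v → H.Adj u w → v ≠ w → ℓ v ≠ ℓ w

/-- The weight `w(P)` of a walk `P` in a labeled graph: the sum over the vertices `x`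
of `P` of the number of colors used by labels of neighbors of `x` in `P` but not by
the label of `x`. -/
noncomputable def walkWeight {N S : Type*} {k : ℕ} {G : SimpleGraph N} (ℓ : N → S → Fin k)
    {a b : N} (P : G.Walk a b) : ℕ :=
  letI := Classical.decEq N
  ∑ x ∈ P.support.toFinset,
    ((⋃ y ∈ P.toSubgraph.neighborSet x, Set.range (ℓ y)) \ Set.range (ℓ x)).ncard

/-- The label function used for the forget operation: the restriction of the label
of a node of `C^c_k(G,T)` to `T \ {v}`. -/
def forgetLabel {V : Type*} (G : SimpleGraph V) (k : ℕ) (T : Set V) (v : V) :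
    CSGNode G k T → (↥(T \ {v}) → Fin k) :=
  fun x t => csgLabel G k T x ⟨t.1, t.2.1⟩

/-!
Forgetting a terminal coarsens the labels: the `T \ {v}`-label of a coloring is its `T`-label
restricted to `T \ {v}`. Contracting the label components of a labeled graph for a labeling `f`
and then those of the quotient for a coarser labeling `g ∘ f` is the same as contracting the
label components for `g ∘ f` at once: two nodes are joined by a `g ∘ f`-monochromatic path
exactly when their `f`-components are joined by one in the quotient.
-/

namespace SimpleGraph.ConnectedComponent

variable {V β : Type*} {G : SimpleGraph V}

theorem eq_of_reachable_of_forall_adj {φ : V → β} (h : ∀ u v, G.Adj u v → φ u = φ v) {u v : V}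
    (huv : G.Reachable u v) : φ u = φ v := by
  obtain ⟨p⟩ := huv
  induction p with
  | nil => rfl
  | cons hadj _ ih => exact (h _ _ hadj).trans ih

def liftOfAdj (φ : V → β) (h : ∀ u v, G.Adj u v → φ u = φ v) : G.ConnectedComponent → β :=
  ConnectedComponent.lift φ fun _ _ p _ => eq_of_reachable_of_forall_adj h p.reachable

end SimpleGraph.ConnectedComponent

section Coarsening

open SimpleGraph.ConnectedComponent

variable {N L M : Type*} (H : SimpleGraph N) (f : N → L) (g : L → M)

theorem sameLabelSub_le_comp : sameLabelSub H f ≤ sameLabelSub H (g ∘ f) :=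
  fun _ _ h => ⟨h.1, congrArg g h.2⟩

def quotGraphCompEquiv :
    (sameLabelSub (quotGraph H f) (g ∘ quotLabel H f)).ConnectedComponent ≃
      (sameLabelSub H (g ∘ f)).ConnectedComponent where
  toFun := liftOfAdj (map (Hom.ofLE (sameLabelSub_le_comp H f g))) <| by
    rintro _ _ ⟨⟨-, a, b, rfl, rfl, hab⟩, hlab⟩
    exact connectedComponentMk_eq_of_adj ⟨hab, hlab⟩
  invFun := liftOfAdj
    (fun a => (sameLabelSub _ _).connectedComponentMk ((sameLabelSub H f).connectedComponentMk a))
    (by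
      rintro a b ⟨hab, hlab⟩
      by_cases hc : (sameLabelSub H f).connectedComponentMk a =
          (sameLabelSub H f).connectedComponentMk b
      · rw [hc]
      · exact connectedComponentMk_eq_of_adj ⟨⟨hc, a, b, rfl, rfl, hab⟩, hlab⟩)
  left_inv C := C.ind fun c => c.ind fun _ => rfl
  right_inv C := C.ind fun _ => rfl

def quotGraphCompIso :
    quotGraph (quotGraph H f) (g ∘ quotLabel H f) ≃g quotGraph H (g ∘ f) where
  toEquiv := quotGraphCompEquiv H f g
  map_rel_iff' {C D} := by
    set e := quotGraphCompEquiv H f g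
    constructor
    · rintro ⟨hne, a, b, ha, hb, hab⟩
      obtain rfl : C = e.symm ((sameLabelSub H (g ∘ f)).connectedComponentMk a) := by
        rw [ha, e.symm_apply_apply]
      obtain rfl : D = e.symm ((sameLabelSub H (g ∘ f)).connectedComponentMk b) := by
        rw [hb, e.symm_apply_apply]
      rw [e.apply_symm_apply, e.apply_symm_apply] at hne
      refine ⟨e.symm.injective.ne hne, _, _, rfl, rfl, fun h => hne ?_, a, b, rfl, rfl, hab⟩
      exact congrArg (map (Hom.ofLE (sameLabelSub_le_comp H f g))) h
    · rintro ⟨hne, -, -, rfl, rfl, -, a, b, rfl, rfl, hab⟩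
      exact ⟨e.injective.ne hne, a, b, rfl, rfl, hab⟩

theorem quotLabel_quotGraphCompIso
    (C : (sameLabelSub (quotGraph H f) (g ∘ quotLabel H f)).ConnectedComponent) :
    quotLabel H (g ∘ f) (quotGraphCompIso H f g C) =
      quotLabel (quotGraph H f) (g ∘ quotLabel H f) C :=
  C.ind fun c => c.ind fun _ => rfl

theorem quotGraphCompIso_mk_mk (a : N) :
    quotGraphCompIso H f g
        ((sameLabelSub _ _).connectedComponentMk ((sameLabelSub H f).connectedComponentMk a)) =
      (sameLabelSub H (g ∘ f)).connectedComponentMk a :=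
  rfl

end Coarsening

theorem statement_2_general {V : Type}
    (G : SimpleGraph V) (k : ℕ) (T : Set V) (v : V) :
    ∃ φ : quotGraph (CSG G k T) (forgetLabel G k T v) ≃g CSG G k (T \ {v}),
      (∀ c : (sameLabelSub (CSG G k T) (forgetLabel G k T v)).ConnectedComponent,
        csgLabel G k (T \ {v}) (φ c) = quotLabel (CSG G k T) (forgetLabel G k T v) c) ∧
      (∀ γ : {f : V → Fin k // IsColoring G k f},
        φ ((sameLabelSub (CSG G k T) (forgetLabel G k T v)).connectedComponentMk
            (csgNode G k T γ)) = csgNode G k (T \ {v}) γ) :=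
  -- Both `forgetLabel G k T v` and `csgLabelFun G k (T \ {v})` are, by definition, the
  -- `T`-labels followed by restriction to `T \ {v}`.
  let restrict : (T → Fin k) → (↥(T \ {v}) → Fin k) := (· ∘ Set.inclusion Set.sdiff_subset)
  ⟨quotGraphCompIso (colorGraph G k) (csgLabelFun G k T) restrict,
    quotLabel_quotGraphCompIso (colorGraph G k) (csgLabelFun G k T) restrict,
    quotGraphCompIso_mk_mk (colorGraph G k) (csgLabelFun G k T) restrict⟩

/-- Forget rule: `C^c_k(G, T \ {v})` is obtained from `C^c_k(G,T)` by
restricting all labels to `T \ {v}` and then contracting every edge between equally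
labeled nodes, and the `γ`-node of `C^c_k(G, T \ {v})` is the node resulting from
contracting the set of nodes containing the `γ`-node of `C^c_k(G,T)`. -/
theorem statement_2 {V : Type} [Fintype V] [DecidableEq V]
    (G : SimpleGraph V) (k : ℕ) (hk : 1 ≤ k) (T : Set V) (v : V) (hv : v ∈ T) :
    ∃ φ : quotGraph (CSG G k T) (forgetLabel G k T v) ≃g CSG G k (T \ {v}),
      (∀ c : (sameLabelSub (CSG G k T) (forgetLabel G k T v)).ConnectedComponent,
        csgLabel G k (T \ {v}) (φ c) = quotLabel (CSG G k T) (forgetLabel G k T v) c) ∧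
      (∀ γ : {f : V → Fin k // IsColoring G k f},
        φ ((sameLabelSub (CSG G k T) (forgetLabel G k T v)).connectedComponentMk
            (csgNode G k T γ)) = csgNode G k (T \ {v}) γ) :=
  statement_2_general G k T v
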